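/- arXiv:2404.02669 — 4 statements merged into one kernel-verified Lean document; each statement's English description precedes it below -/
import Mathlib

section
/- The vertices of the graphical zonotope Z_G are in bijection with the acyclic orientations of G. Explicitly, for each acyclic orientation \rho of G, the point \sum_{{i,j} \in E} e_{head_\rho(i,j)} (summing, for each edge, the basis vector of the endpoint toward which the edge is directed) is a vertex of Z_G, and every vertex of Z_G arises this way from a unique acyclic orientation. -/
open Pointwise

noncomputable def edgeSeg {V : Type*} [DecidableEq V] : Sym2 V → Set (V → ℝ) :=
  Sym2.lift ⟨fun i j => segment ℝ (Pi.single i 1) (Pi.single j 1),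
    fun i j => segment_symm ℝ (Pi.single i 1) (Pi.single j 1)⟩

noncomputable def graphicalZonotope {V : Type*} [Fintype V] [DecidableEq V]
    (G : SimpleGraph V) [DecidableRel G.Adj] : Set (V → ℝ) :=
  ∑ e ∈ G.edgeFinset, edgeSeg e

/-- An acyclic orientation of `G`, encoded by a "head" function `h` choosing, for each
edge, the endpoint toward which the edge is directed, such that the resulting directed
graph has no directed cycle. -/
def IsAcyclicOrientation {V : Type*} (G : SimpleGraph V) (h : Sym2 V → V) : Prop :=
  (∀ e ∈ G.edgeSet, h e ∈ e) ∧
    ∀ v : V, ¬ Relation.TransGen (fun a b => G.Adj a b ∧ h s(a, b) = b) v v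

/-- The point `∑_{{i,j} ∈ E} e_{head_ρ(i,j)}` of an orientation with head function `h`. -/
noncomputable def orientationPoint {V : Type*} [Fintype V] [DecidableEq V]
    (G : SimpleGraph V) [DecidableRel G.Adj] (h : Sym2 V → V) : V → ℝ :=
  ∑ e ∈ G.edgeFinset, Pi.single (h e) (1 : ℝ)

namespace GZaux

variable {V : Type*} [Fintype V] [DecidableEq V]

noncomputable def lfun (c : V → ℝ) (x : V → ℝ) : ℝ := ∑ v, c v * x v

lemma lfun_single (c : V → ℝ) (i : V) : lfun c (Pi.single i 1) = c i := by
  unfold lfun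
  rw [Finset.sum_eq_single i]
  · simp
  · intro b _ hb; rw [Pi.single_eq_of_ne hb]; ring
  · simp

lemma lfun_add (c x y : V → ℝ) : lfun c (x + y) = lfun c x + lfun c y := by
  unfold lfun
  rw [← Finset.sum_add_distrib]
  exact Finset.sum_congr rfl fun v _ => by simp [mul_add]

lemma lfun_smul (c : V → ℝ) (a : ℝ) (x : V → ℝ) : lfun c (a • x) = a * lfun c x := by
  unfold lfun
  rw [Finset.mul_sum]
  exact Finset.sum_congr rfl fun v _ => by simp [Pi.smul_apply]; ring

lemma lfun_sum {ι : Type*} (c : V → ℝ) (s : Finset ι) (g : ι → V → ℝ) :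
    lfun c (∑ e ∈ s, g e) = ∑ e ∈ s, lfun c (g e) := by
  unfold lfun
  simp_rw [Finset.sum_apply, Finset.mul_sum]
  rw [Finset.sum_comm]

lemma edgeSeg_mk (i j : V) :
    edgeSeg s(i, j) = segment ℝ ((Pi.single i 1 : V → ℝ)) ((Pi.single j 1 : V → ℝ)) := rfl

lemma single_mem_edgeSeg {e : Sym2 V} {v : V} (hv : v ∈ e) :
    (Pi.single v 1 : V → ℝ) ∈ edgeSeg e := by
  induction e using Sym2.ind with
  | _ i j =>
    rw [Sym2.mem_iff] at hv
    rw [edgeSeg_mk]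
    rcases hv with rfl | rfl
    · exact left_mem_segment ℝ _ _
    · exact right_mem_segment ℝ _ _

lemma edge_rep {G : SimpleGraph V} {e : Sym2 V} (he : e ∈ G.edgeSet) :
    ∃ i j, G.Adj i j ∧ e = s(i, j) := by
  induction e using Sym2.ind with
  | _ i j => exact ⟨i, j, he, rfl⟩

lemma orientationPoint_mem (G : SimpleGraph V) [DecidableRel G.Adj] (h : Sym2 V → V)
    (hh : ∀ e ∈ G.edgeSet, h e ∈ e) : orientationPoint G h ∈ graphicalZonotope G := by
  rw [graphicalZonotope, Set.mem_finset_sum]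
  exact ⟨fun e => Pi.single (h e) 1,
    fun {e} he => single_mem_edgeSeg (hh e (SimpleGraph.mem_edgeFinset.mp he)), rfl⟩

lemma seg_max {c : V → ℝ} {i j : V} (hij : c i < c j) {z : V → ℝ}
    (hz : z ∈ segment ℝ ((Pi.single i 1 : V → ℝ)) ((Pi.single j 1 : V → ℝ))) :
    lfun c z ≤ c j ∧ (lfun c z = c j → z = Pi.single j 1) := by
  obtain ⟨a, b, ha, hb, hab, rfl⟩ := hz
  have hl : lfun c (a • (Pi.single i 1 : V → ℝ) + b • (Pi.single j 1 : V → ℝ)) = a * c i + b * c j := by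
    rw [lfun_add, lfun_smul, lfun_smul, lfun_single, lfun_single]
  rw [hl]
  have h2 : c j - (a * c i + b * c j) = a * (c j - c i) := by
    linear_combination (-(c j)) * hab
  constructor
  · linarith [mul_nonneg ha (sub_nonneg.mpr hij.le)]
  · intro he
    have h1 : a * (c j - c i) = 0 := by linear_combination c j * hab - he
    have ha0 : a = 0 := by
      rcases mul_eq_zero.mp h1 with h | h
      · exact h
      · exfalso; linarith [sub_eq_zero.mp h]
    have hb1 : b = 1 := by linarith
    rw [ha0, hb1, zero_smul, one_smul, zero_add]

lemma extreme_of_max {S : Set (V → ℝ)} {x₀ : V → ℝ} {c : V → ℝ}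
    (hx : x₀ ∈ S)
    (hmax : ∀ y ∈ S, lfun c y ≤ lfun c x₀ ∧ (lfun c y = lfun c x₀ → y = x₀)) :
    x₀ ∈ Set.extremePoints ℝ S := by
  refine ⟨hx, fun y hy z hz hseg => ?_⟩
  obtain ⟨a, b, ha, hb, hab, habx⟩ := hseg
  have h1 : lfun c x₀ = a * lfun c y + b * lfun c z := by
    rw [← habx, lfun_add, lfun_smul, lfun_smul]
  have hy' := hmax y hy
  have hz' := hmax z hz
  have hone : a * lfun c x₀ + b * lfun c x₀ = lfun c x₀ := by
    rw [← add_mul, hab, one_mul]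
  have hye : lfun c y = lfun c x₀ := by
    by_contra hne
    have hlt : lfun c y < lfun c x₀ := lt_of_le_of_ne hy'.1 hne
    have p1 := mul_lt_mul_of_pos_left hlt ha
    have p2 := mul_le_mul_of_nonneg_left hz'.1 hb.le
    linarith
  have hze : lfun c z = lfun c x₀ := by
    by_contra hne
    have hlt : lfun c z < lfun c x₀ := lt_of_le_of_ne hz'.1 hne
    have p1 := mul_lt_mul_of_pos_left hlt hb
    have p2 := mul_le_mul_of_nonneg_left hy'.1 ha.le
    linarith
  exact hy'.2 hye

lemma part1 (G : SimpleGraph V) [DecidableRel G.Adj] (h : Sym2 V → V)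
    (hho : IsAcyclicOrientation G h) :
    orientationPoint G h ∈ Set.extremePoints ℝ (graphicalZonotope G) := by
  classical
  obtain ⟨hmem, hacyc⟩ := hho
  set R : V → V → Prop := fun a b => G.Adj a b ∧ h s(a, b) = b with hR
  set c : V → ℝ := fun v => ((Set.ncard {u | Relation.ReflTransGen R u v} : ℝ)) with hc
  have hmono : ∀ a b, R a b → c a < c b := by
    intro a b hab
    have hsub : {u | Relation.ReflTransGen R u a} ⊂ {u | Relation.ReflTransGen R u b} := by
      constructor
      · intro u hu; exact Relation.ReflTransGen.tail hu hab
      · intro hsup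
        have hb : b ∈ {u | Relation.ReflTransGen R u b} := Relation.ReflTransGen.refl
        have hba : Relation.ReflTransGen R b a := hsup hb
        exact hacyc b (Relation.TransGen.tail' hba hab)
    have hlt := Set.ncard_lt_ncard hsub (Set.toFinite _)
    simp only [hc]
    exact_mod_cast hlt
  apply extreme_of_max (c := c) (orientationPoint_mem G h hmem)
  intro y hy
  rw [graphicalZonotope, Set.mem_finset_sum] at hy
  obtain ⟨g, hg, hsum⟩ := hy
  have key : ∀ e ∈ G.edgeFinset,
      lfun c (g e) ≤ c (h e) ∧ (lfun c (g e) = c (h e) → g e = Pi.single (h e) 1) := by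
    intro e he
    have heS : e ∈ G.edgeSet := SimpleGraph.mem_edgeFinset.mp he
    obtain ⟨i, j, hij, rfl⟩ := edge_rep heS
    have hme := hmem _ heS
    rw [Sym2.mem_iff] at hme
    have hgs : g s(i, j) ∈ segment ℝ ((Pi.single i 1 : V → ℝ)) ((Pi.single j 1 : V → ℝ)) := by
      rw [← edgeSeg_mk]; exact hg he
    rcases hme with hme | hme
    · have hR' : R j i := ⟨hij.symm, by rwa [Sym2.eq_swap]⟩
      have := seg_max (hmono j i hR') (by rwa [segment_symm] at hgs)
      rw [hme]; exact this
    · have hR' : R i j := ⟨hij, hme⟩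
      have := seg_max (hmono i j hR') hgs
      rw [hme]; exact this
  have hsum1 : lfun c y = ∑ e ∈ G.edgeFinset, lfun c (g e) := by rw [← hsum, lfun_sum]
  have hsum2 : lfun c (orientationPoint G h) = ∑ e ∈ G.edgeFinset, c (h e) := by
    rw [orientationPoint, lfun_sum]
    exact Finset.sum_congr rfl fun e _ => lfun_single c (h e)
  constructor
  · rw [hsum1, hsum2]
    exact Finset.sum_le_sum fun e he => (key e he).1
  · intro heq
    rw [hsum1, hsum2] at heq
    have hall := (Finset.sum_eq_sum_iff_of_le fun e he => (key e he).1).mp heq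
    rw [← hsum, orientationPoint]
    exact Finset.sum_congr rfl fun e he => (key e he).2 (hall e he)

lemma transGen_exists_fn {α : Type*} {R : α → α → Prop} {a b : α}
    (h : Relation.TransGen R a b) :
    ∃ n, 0 < n ∧ ∃ f : ℕ → α, f 0 = a ∧ f n = b ∧ ∀ k < n, R (f k) (f (k + 1)) := by
  induction h with
  | @single c hr =>
    refine ⟨1, one_pos, fun k => if k = 0 then a else c, by simp, by simp, ?_⟩
    intro k hk
    have hk0 : k = 0 := by omega
    subst hk0
    simpa using hr
  | @tail b c hab hbc ih =>
    obtain ⟨n, hn, f, hf0, hfn, hs⟩ := ih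
    refine ⟨n + 1, by omega, fun k => if k ≤ n then f k else c, by simp [hf0], by simp, ?_⟩
    intro k hk
    by_cases hkn : k < n
    · simp only [if_pos (show k ≤ n by omega), if_pos (show k + 1 ≤ n by omega)]
      exact hs k hkn
    · have hke : k = n := by omega
      subst hke
      simp only [if_pos (le_refl k), if_neg (show ¬ (k + 1 ≤ k) by omega), hfn]
      exact hbc

lemma not_extreme_of_cycle (G : SimpleGraph V) [DecidableRel G.Adj] (h : Sym2 V → V)
    (hmem : ∀ e ∈ G.edgeSet, h e ∈ e) (v : V)
    (hcyc : Relation.TransGen (fun a b => G.Adj a b ∧ h s(a, b) = b) v v) :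
    orientationPoint G h ∉ Set.extremePoints ℝ (graphicalZonotope G) := by
  classical
  intro hext
  set R : V → V → Prop := fun a b => G.Adj a b ∧ h s(a, b) = b with hR
  obtain ⟨n, hn, f, hf0, hfn, hstep⟩ := transGen_exists_fn hcyc
  have hQ : ∃ d, 0 < d ∧ ∃ i, i + d ≤ n ∧ f i = f (i + d) :=
    ⟨n, hn, 0, by simp, by simp [hf0, hfn]⟩
  set d := Nat.find hQ with hd
  obtain ⟨hd0, i, hidn, hfi⟩ := Nat.find_spec hQ
  have hmin : ∀ d' < d, ¬(0 < d' ∧ ∃ i, i + d' ≤ n ∧ f i = f (i + d')) :=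
    fun d' hd' => Nat.find_min hQ hd'
  set w : ℕ → V := fun k => f (i + k) with hw
  have hw0 : w d = w 0 := by simp only [hw]; rw [← hfi]; simp
  have hstepw : ∀ k, k < d → R (w k) (w (k + 1)) := by
    intro k hk
    have h1 : i + k < n := by omega
    have h2 := hstep (i + k) h1
    have h3 : i + k + 1 = i + (k + 1) := by omega
    rw [h3] at h2
    exact h2
  have winj : ∀ k, k < d → ∀ l, l < d → w k = w l → k = l := by
    intro k hk l hl he
    by_contra hne
    rcases Nat.lt_or_ge k l with hkl | hkl
    · refine hmin (l - k) (by omega) ⟨by omega, i + k, by omega, ?_⟩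
      have h1 : i + k + (l - k) = i + l := by omega
      rw [h1]; exact he
    · have hlk : l < k := by omega
      refine hmin (k - l) (by omega) ⟨by omega, i + l, by omega, ?_⟩
      have h1 : i + l + (k - l) = i + k := by omega
      rw [h1]; exact he.symm
  have hAdj : ∀ k, k < d → G.Adj (w k) (w (k + 1)) := fun k hk => (hstepw k hk).1
  set E : ℕ → Sym2 V := fun k => s(w k, w (k + 1)) with hE
  have hEmem : ∀ k, k < d → E k ∈ G.edgeFinset := fun k hk =>
    SimpleGraph.mem_edgeFinset.mpr (hAdj k hk)
  have hhE : ∀ k, k < d → h (E k) = w (k + 1) := fun k hk => (hstepw k hk).2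
  have Einj : ∀ k, k < d → ∀ l, l < d → E k = E l → k = l := by
    intro k hk l hl he
    have hh1 : w (k + 1) = w (l + 1) := by rw [← hhE k hk, ← hhE l hl, he]
    by_cases hk1 : k + 1 < d
    · by_cases hl1 : l + 1 < d
      · have := winj (k + 1) hk1 (l + 1) hl1 hh1; omega
      · have hl1' : l + 1 = d := by omega
        have h2 : w (k + 1) = w 0 := by rw [hh1, hl1', hw0]
        have := winj (k + 1) hk1 0 hd0 h2
        omega
    · have hk1' : k + 1 = d := by omega
      by_cases hl1 : l + 1 < d
      · have h2 : w 0 = w (l + 1) := by rw [← hw0, ← hk1', hh1]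
        have := winj 0 hd0 (l + 1) hl1 h2
        omega
      · omega
  set x := orientationPoint G h with hx
  set u : ℕ → (V → ℝ) := fun k => Pi.single (w k) 1 with hu
  have hne01 : w 0 ≠ w 1 := (hAdj 0 hd0).ne
  -- first flipped point
  set g₁ : Sym2 V → (V → ℝ) := fun e => if e = E 0 then u 0 else Pi.single (h e) 1 with hg₁
  have hsum₁ : ∑ e ∈ G.edgeFinset, g₁ e = x + u 0 - u 1 := by
    have hrw : ∀ e ∈ G.edgeFinset,
        g₁ e = Pi.single (h e) 1 + (if e = E 0 then u 0 - u 1 else 0) := by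
      intro e _
      by_cases h0 : e = E 0
      · subst h0
        simp only [hg₁, if_pos rfl]
        rw [hhE 0 hd0]
        show u 0 = u 1 + (u 0 - u 1)
        abel
      · simp [hg₁, h0]
    rw [Finset.sum_congr rfl hrw, Finset.sum_add_distrib,
      Finset.sum_ite_eq' G.edgeFinset (E 0) (fun _ => u 0 - u 1),
      if_pos (hEmem 0 hd0)]
    rw [hx, orientationPoint]
    abel
  have hmem₁ : ∀ {e}, e ∈ G.edgeFinset → g₁ e ∈ edgeSeg e := by
    intro e he
    simp only [hg₁]
    by_cases h0 : e = E 0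
    · rw [if_pos h0, h0]
      simp only [hE]
      exact left_mem_segment ℝ _ _
    · rw [if_neg h0]
      exact single_mem_edgeSeg (hmem e (SimpleGraph.mem_edgeFinset.mp he))
  have hy₁ : x + u 0 - u 1 ∈ graphicalZonotope G := by
    rw [graphicalZonotope, Set.mem_finset_sum]
    exact ⟨g₁, hmem₁, hsum₁⟩
  -- second flipped point
  set P : Sym2 V → Prop := fun e => ∃ k, 0 < k ∧ k < d ∧ e = E k with hP
  set g₂ : Sym2 V → (V → ℝ) :=
    fun e => if he : P e then Pi.single (w he.choose) 1 else Pi.single (h e) 1 with hg₂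
  have hg₂E : ∀ k, 0 < k → k < d → g₂ (E k) = u k := by
    intro k h0k hkd
    have hPk : P (E k) := ⟨k, h0k, hkd, rfl⟩
    simp only [hg₂, dif_pos hPk]
    have hspec := hPk.choose_spec
    have hck : hPk.choose = k := Einj hPk.choose hspec.2.1 k hkd hspec.2.2.symm
    rw [hck, hu]
  have hmem₂ : ∀ {e}, e ∈ G.edgeFinset → g₂ e ∈ edgeSeg e := by
    intro e he
    simp only [hg₂]
    by_cases hPe : P e
    · rw [dif_pos hPe]
      obtain ⟨hk0, hkd, hek⟩ := hPe.choose_spec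
      have hgoal : edgeSeg e = edgeSeg (E hPe.choose) := congrArg edgeSeg hek
      rw [hgoal]
      simp only [hE]
      exact left_mem_segment ℝ _ _
    · rw [dif_neg hPe]
      exact single_mem_edgeSeg (hmem e (SimpleGraph.mem_edgeFinset.mp he))
  set C₂ : Finset (Sym2 V) := (Finset.Ico 1 d).image E with hC₂
  have hC₂sub : C₂ ⊆ G.edgeFinset := by
    intro e he
    obtain ⟨k, hk, rfl⟩ := Finset.mem_image.mp he
    exact hEmem k (Finset.mem_Ico.mp hk).2
  have hsum₂ : ∑ e ∈ G.edgeFinset, g₂ e = x + u 1 - u 0 := by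
    have hrw : ∀ e ∈ G.edgeFinset,
        g₂ e = Pi.single (h e) 1 + (g₂ e - Pi.single (h e) 1) := by
      intro e _; abel
    rw [Finset.sum_congr rfl hrw, Finset.sum_add_distrib]
    have h1 : ∑ e ∈ C₂, (g₂ e - Pi.single (h e) 1)
        = ∑ e ∈ G.edgeFinset, (g₂ e - Pi.single (h e) 1) := by
      apply Finset.sum_subset hC₂sub
      intro e _ heC
      have hnP : ¬ P e := by
        intro ⟨k, hk0, hkd, hek⟩
        exact heC (Finset.mem_image.mpr ⟨k, Finset.mem_Ico.mpr ⟨by omega, hkd⟩, hek.symm⟩)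
      simp only [hg₂, dif_neg hnP]
      abel
    rw [← h1]
    have h2 : ∑ e ∈ C₂, (g₂ e - Pi.single (h e) 1)
        = ∑ k ∈ Finset.Ico 1 d, (u k - u (k + 1)) := by
      rw [hC₂, Finset.sum_image (fun a ha b hb hab =>
        Einj a (Finset.mem_Ico.mp ha).2 b (Finset.mem_Ico.mp hb).2 hab)]
      apply Finset.sum_congr rfl
      intro k hk
      obtain ⟨hk1, hkd⟩ := Finset.mem_Ico.mp hk
      rw [hg₂E k (by omega) hkd, hhE k hkd]
    have h3 : ∑ k ∈ Finset.Ico 1 d, (u k - u (k + 1)) = u 1 - u 0 := by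
      rw [Finset.sum_Ico_eq_sum_range]
      have hcg : ∀ j ∈ Finset.range (d - 1),
          u (1 + j) - u (1 + j + 1) = (fun m => u (1 + m)) j - (fun m => u (1 + m)) (j + 1) := by
        intro j _
        have : 1 + j + 1 = 1 + (j + 1) := by omega
        rw [this]
      rw [Finset.sum_congr rfl hcg, Finset.sum_range_sub' (fun m => u (1 + m))]
      have h4 : 1 + (d - 1) = d := by omega
      simp only [Nat.add_zero, h4]
      have h5 : u d = u 0 := by rw [hu]; simp only [hw0]
      rw [h5]
    rw [h2, h3, hx, orientationPoint]
    abel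
  have hy₂ : x + u 1 - u 0 ∈ graphicalZonotope G := by
    rw [graphicalZonotope, Set.mem_finset_sum]
    exact ⟨g₂, hmem₂, hsum₂⟩
  have hxseg : x ∈ openSegment ℝ (x + u 0 - u 1) (x + u 1 - u 0) := by
    refine ⟨1/2, 1/2, by norm_num, by norm_num, by norm_num, ?_⟩
    funext t
    simp only [Pi.add_apply, Pi.sub_apply, Pi.smul_apply, smul_eq_mul]
    ring
  have h1 := hext.2 hy₁ hy₂ hxseg
  have hcontr := congrFun h1 (w 0)
  simp only [Pi.add_apply, Pi.sub_apply, hu] at hcontr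
  rw [Pi.single_eq_same, Pi.single_eq_of_ne hne01] at hcontr
  norm_num at hcontr

lemma part2exists (G : SimpleGraph V) [DecidableRel G.Adj] (x : V → ℝ)
    (hx : x ∈ Set.extremePoints ℝ (graphicalZonotope G)) :
    ∃ h : Sym2 V → V, IsAcyclicOrientation G h ∧ orientationPoint G h = x := by
  classical
  have hxZ := hx.1
  rw [graphicalZonotope, Set.mem_finset_sum] at hxZ
  obtain ⟨g, hg, hsum⟩ := hxZ
  have hend : ∀ e ∈ G.edgeFinset, ∃ v, v ∈ e ∧ g e = Pi.single v 1 := by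
    intro e he
    by_contra hcon
    push_neg at hcon
    have heS := SimpleGraph.mem_edgeFinset.mp he
    obtain ⟨i, j, hij, rfl⟩ := edge_rep heS
    have hgi : (Pi.single i 1 : V → ℝ) ≠ g s(i, j) :=
      fun hc => hcon i (Sym2.mem_iff.mpr (Or.inl rfl)) hc.symm
    have hgj : (Pi.single j 1 : V → ℝ) ≠ g s(i, j) :=
      fun hc => hcon j (Sym2.mem_iff.mpr (Or.inr rfl)) hc.symm
    have hseg : g s(i, j) ∈ segment ℝ ((Pi.single i 1 : V → ℝ)) ((Pi.single j 1 : V → ℝ)) := by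
      rw [← edgeSeg_mk]; exact hg he
    have hopen := mem_openSegment_of_ne_left_right hgi hgj hseg
    obtain ⟨a, b, ha, hb, hab, hge⟩ := hopen
    set S : V → ℝ := ∑ e' ∈ G.edgeFinset.erase s(i, j), g e' with hS
    have hxS : x = S + g s(i, j) := by
      rw [hS, ← hsum, ← Finset.sum_erase_add G.edgeFinset g he]
    have hmod : ∀ v, v ∈ (s(i, j) : Sym2 V) → S + Pi.single v 1 ∈ graphicalZonotope G := by
      intro v hv
      rw [graphicalZonotope, Set.mem_finset_sum]
      refine ⟨Function.update g s(i, j) (Pi.single v 1), ?_, ?_⟩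
      · intro e' he'
        by_cases hee : e' = s(i, j)
        · subst hee; rw [Function.update_self]; exact single_mem_edgeSeg hv
        · rw [Function.update_of_ne hee]; exact hg he'
      · rw [← Finset.sum_erase_add _ _ he, Function.update_self]
        congr 1
        apply Finset.sum_congr rfl
        intro e' he'
        rw [Function.update_of_ne (Finset.ne_of_mem_erase he')]
    have hxseg2 : x ∈ openSegment ℝ (S + Pi.single i 1) (S + Pi.single j 1) := by
      refine ⟨a, b, ha, hb, hab, ?_⟩
      have hSS : a • S + b • S = S := by rw [← add_smul, hab, one_smul]
      calc a • (S + (Pi.single i 1 : V → ℝ)) + b • (S + (Pi.single j 1 : V → ℝ))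
          = (a • S + b • S) + (a • (Pi.single i 1 : V → ℝ) + b • (Pi.single j 1 : V → ℝ)) := by
            rw [smul_add, smul_add]; abel
        _ = S + g s(i, j) := by rw [hSS, hge]
        _ = x := hxS.symm
    have hp1 := hx.2 (hmod i (Sym2.mem_iff.mpr (Or.inl rfl)))
      (hmod j (Sym2.mem_iff.mpr (Or.inr rfl))) hxseg2
    have hp2 := hx.2 (hmod j (Sym2.mem_iff.mpr (Or.inr rfl)))
      (hmod i (Sym2.mem_iff.mpr (Or.inl rfl))) (by rw [openSegment_symm]; exact hxseg2)
    have hpe : (Pi.single i 1 : V → ℝ) = Pi.single j 1 :=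
      add_left_cancel (hp1.trans hp2.symm)
    have hcontr := congrFun hpe i
    rw [Pi.single_eq_same, Pi.single_eq_of_ne hij.ne] at hcontr
    norm_num at hcontr
  set h : Sym2 V → V := fun e =>
    if he : ∃ v, v ∈ e ∧ g e = Pi.single v 1 then he.choose else e.out.1 with hh
  have hhe : ∀ e ∈ G.edgeFinset, h e ∈ e ∧ g e = Pi.single (h e) 1 := by
    intro e he
    have hex := hend e he
    simp only [hh, dif_pos hex]
    exact hex.choose_spec
  have hhead : ∀ e ∈ G.edgeSet, h e ∈ e :=
    fun e he => (hhe e (SimpleGraph.mem_edgeFinset.mpr he)).1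
  have hpt : orientationPoint G h = x := by
    rw [orientationPoint, ← hsum]
    exact Finset.sum_congr rfl fun e he => ((hhe e he).2).symm
  refine ⟨h, ⟨hhead, ?_⟩, hpt⟩
  intro v hv
  exact not_extreme_of_cycle G h hhead v hv (hpt ▸ hx)

lemma uniq (G : SimpleGraph V) [DecidableRel G.Adj] (h h' : Sym2 V → V)
    (hh : IsAcyclicOrientation G h) (hh' : IsAcyclicOrientation G h')
    (hp : orientationPoint G h' = orientationPoint G h) :
    ∀ e ∈ G.edgeSet, h' e = h e := by
  classical
  intro e₀ he₀
  by_contra hne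
  set R2 : V → V → Prop := fun a b => G.Adj a b ∧ h s(a, b) = b ∧ h' s(a, b) = a with hR2
  have hedge : ∀ e ∈ G.edgeSet, h' e ≠ h e → e = s(h' e, h e) := by
    intro e he hnee
    obtain ⟨i, j, hij, rfl⟩ := edge_rep he
    have h1 := hh.1 _ he
    have h2 := hh'.1 _ he
    rw [Sym2.mem_iff] at h1 h2
    rcases h1 with h1 | h1 <;> rcases h2 with h2 | h2
    · exact absurd (h2.trans h1.symm) hnee
    · rw [h1, h2, Sym2.eq_swap]
    · rw [h1, h2]
    · exact absurd (h2.trans h1.symm) hnee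
  have hcount : ∀ b : V, (∃ a, R2 a b) → ∃ c, R2 b c := by
    rintro b ⟨a, hab⟩
    have e1 : ∀ f : Sym2 V → V, ((∑ e ∈ G.edgeFinset, Pi.single (f e) (1:ℝ) : V → ℝ)) b
        = ((G.edgeFinset.filter (fun e => b = f e)).card : ℝ) := by
      intro f
      rw [Finset.sum_apply]
      rw [Finset.sum_congr rfl (fun e _ => Pi.single_apply (f e) (1:ℝ) b)]
      rw [Finset.sum_boole]
    have hcard : (G.edgeFinset.filter (fun e => b = h' e)).card
        = (G.edgeFinset.filter (fun e => b = h e)).card := by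
      have hcf := congrFun hp b
      rw [orientationPoint, orientationPoint, e1 h', e1 h] at hcf
      exact_mod_cast hcf
    have hsplit : ∀ f f' : Sym2 V → V,
        (G.edgeFinset.filter (fun e => b = f e ∧ b = f' e)).card
          + (G.edgeFinset.filter (fun e => b = f e ∧ ¬ b = f' e)).card
        = (G.edgeFinset.filter (fun e => b = f e)).card := by
      intro f f'
      have := Finset.card_filter_add_card_filter_not
        (s := G.edgeFinset.filter (fun e => b = f e)) (p := fun e => b = f' e)
      rw [Finset.filter_filter, Finset.filter_filter] at this
      exact this
    have hBoth : (G.edgeFinset.filter (fun e => b = h e ∧ b = h' e)).card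
        = (G.edgeFinset.filter (fun e => b = h' e ∧ b = h e)).card := by
      congr 1
      apply Finset.filter_congr
      intro e _
      constructor <;> exact fun hx => ⟨hx.2, hx.1⟩
    have hA : 0 < (G.edgeFinset.filter (fun e => b = h e ∧ ¬ b = h' e)).card := by
      apply Finset.card_pos.mpr
      refine ⟨s(a, b), Finset.mem_filter.mpr ⟨SimpleGraph.mem_edgeFinset.mpr hab.1,
        hab.2.1.symm, ?_⟩⟩
      rw [hab.2.2]
      exact hab.1.ne'
    have hB : 0 < (G.edgeFinset.filter (fun e => b = h' e ∧ ¬ b = h e)).card := by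
      have s1 := hsplit h h'
      have s2 := hsplit h' h
      omega
    obtain ⟨e, heB⟩ := Finset.card_pos.mp hB
    obtain ⟨heE, hbe', hbe⟩ := Finset.mem_filter.mp heB
    have heS := SimpleGraph.mem_edgeFinset.mp heE
    have hhe : h' e ≠ h e := by
      intro hc
      exact hbe (hbe'.trans hc)
    have he' := hedge e heS hhe
    obtain ⟨c, hc⟩ : ∃ c, h e = c := ⟨h e, rfl⟩
    have he2 : e = s(b, c) := by rw [he', ← hbe', hc]
    refine ⟨c, ?_, ?_, ?_⟩
    · rw [← SimpleGraph.mem_edgeSet, ← he2]; exact heS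
    · rw [← he2]; exact hc
    · rw [← he2]; exact hbe'.symm
  have hstart : R2 (h' e₀) (h e₀) := by
    have he' := hedge e₀ he₀ hne
    obtain ⟨c, hc⟩ : ∃ c, h e₀ = c := ⟨h e₀, rfl⟩
    obtain ⟨c', hc'⟩ : ∃ c', h' e₀ = c' := ⟨h' e₀, rfl⟩
    rw [hc, hc'] at he' ⊢
    refine ⟨?_, ?_, ?_⟩
    · rw [← SimpleGraph.mem_edgeSet, ← he']; exact he₀
    · rw [← he']; exact hc
    · rw [← he']; exact hc'
  let g : ℕ → {b : V // ∃ a, R2 a b} := fun n => Nat.rec ⟨h e₀, h' e₀, hstart⟩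
    (fun _ p => ⟨(hcount p.1 p.2).choose, p.1, (hcount p.1 p.2).choose_spec⟩) n
  have hgstep : ∀ n, R2 (g n).1 (g (n + 1)).1 := fun n => (hcount (g n).1 (g n).2).choose_spec
  have hchain : ∀ m k, Relation.TransGen R2 ((g m).1) ((g (m + k + 1)).1) := by
    intro m k
    induction k with
    | zero => exact Relation.TransGen.single (hgstep m)
    | succ k ih =>
      have hstep2 := hgstep (m + k + 1)
      have heq : m + (k + 1) + 1 = (m + k + 1) + 1 := by omega
      rw [heq]
      exact ih.tail hstep2
  have key : ∀ m n, m < n → (g m).1 = (g n).1 → False := by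
    intro m n hlt he
    have hn : n = m + (n - m - 1) + 1 := by omega
    have hch := hchain m (n - m - 1)
    rw [← hn, ← he] at hch
    exact hh.2 _ (Relation.TransGen.mono (fun a b hab => ⟨hab.1, hab.2.1⟩) _ _ hch)
  obtain ⟨m, n, hmn, he⟩ := Finite.exists_ne_map_eq_of_infinite (fun n => (g n).1)
  rcases lt_or_gt_of_ne hmn with hlt | hlt
  · exact key m n hlt he
  · exact key n m hlt he.symm

end GZaux

/-- The vertices (extreme points) of the graphical zonotope `Z_G` are in bijection with
the acyclic orientations of `G`: every acyclic orientation gives a vertex, and every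
vertex arises from an acyclic orientation which is unique (on the edges of `G`). -/
theorem graphicalZonotope_vertices {V : Type*} [Fintype V] [DecidableEq V]
    (G : SimpleGraph V) [DecidableRel G.Adj] :
    (∀ h : Sym2 V → V, IsAcyclicOrientation G h →
        orientationPoint G h ∈ Set.extremePoints ℝ (graphicalZonotope G)) ∧
    (∀ x ∈ Set.extremePoints ℝ (graphicalZonotope G),
        ∃ h : Sym2 V → V, IsAcyclicOrientation G h ∧ orientationPoint G h = x ∧
          ∀ h' : Sym2 V → V, IsAcyclicOrientation G h' → orientationPoint G h' = x →
            ∀ e ∈ G.edgeSet, h' e = h e) := by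
  constructor
  · exact fun h hh => GZaux.part1 G h hh
  · intro x hx
    obtain ⟨h, hho, hpt⟩ := GZaux.part2exists G x hx
    exact ⟨h, hho, hpt, fun h' hh' hpt' =>
      GZaux.uniq G h h' hho hh' (hpt'.trans hpt.symm)⟩
end

section
/- If Q is a deformation of a polytope P, then the deformation cone DC(Q) is a face of the deformation cone DC(P). -/
open Pointwise

def IsPolytope {E : Type*} [AddCommGroup E] [Module ℝ E] (P : Set E) : Prop :=
  ∃ S : Finset E, P = convexHull ℝ (S : Set E)

def IsDeformation {E : Type*} [AddCommGroup E] [Module ℝ E] (Q P : Set E) : Prop :=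
  ∃ μ : ℝ, 0 < μ ∧ ∃ R : Set E, IsPolytope R ∧ μ • P = Q + R

/-- The deformation cone of a polytope `P`: the collection of all its deformations
(weak Minkowski summands), a cone under Minkowski addition and dilation. -/
def DefCone {E : Type*} [AddCommGroup E] [Module ℝ E] (P : Set E) : Set (Set E) :=
  {Q | IsPolytope Q ∧ IsDeformation Q P}

lemma IsPolytope.add {E : Type*} [AddCommGroup E] [Module ℝ E] {A B : Set E}
    (hA : IsPolytope A) (hB : IsPolytope B) : IsPolytope (A + B) := by
  classical
  obtain ⟨S, rfl⟩ := hA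
  obtain ⟨T, rfl⟩ := hB
  exact ⟨S + T, by rw [Finset.coe_add, convexHull_add]⟩

lemma IsPolytope.smul {E : Type*} [AddCommGroup E] [Module ℝ E] {A : Set E}
    (hA : IsPolytope A) (c : ℝ) : IsPolytope (c • A) := by
  classical
  obtain ⟨S, rfl⟩ := hA
  exact ⟨c • S, by rw [Finset.coe_smul_finset, convexHull_smul]⟩

/-- If `Q` is a deformation of `P`, then `DC(Q)` is a face of `DC(P)`: it is a
subcone of `DC(P)` which is extreme for Minkowski addition. -/
theorem defCone_face_of_deformation {E : Type*} [AddCommGroup E] [Module ℝ E]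
    (P Q : Set E) (hP : IsPolytope P) (hQ : IsPolytope Q)
    (hdef : IsDeformation Q P) :
    DefCone Q ⊆ DefCone P ∧
      ∀ A ∈ DefCone P, ∀ B ∈ DefCone P,
        A + B ∈ DefCone Q → A ∈ DefCone Q ∧ B ∈ DefCone Q := by
  obtain ⟨μ, hμ, R, hR, hPQ⟩ := hdef
  constructor
  · rintro A ⟨hApoly, ν, hν, S, hS, hQA⟩
    refine ⟨hApoly, ν * μ, by positivity, S + ν • R, hS.add (hR.smul ν), ?_⟩
    rw [mul_smul, hPQ, smul_add, hQA, add_assoc]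
  · rintro A ⟨hApoly, -⟩ B ⟨hBpoly, -⟩ ⟨-, ν, hν, S, hS, hQAB⟩
    constructor
    · exact ⟨hApoly, ν, hν, B + S, hBpoly.add hS, by rw [hQAB, add_assoc]⟩
    · exact ⟨hBpoly, ν, hν, A + S, hApoly.add hS, by rw [hQAB]; abel⟩
end

section
/- The flip graph on acyclic orientations of a finite graph G (two acyclic orientations being adjacent if they differ in the orientation of exactly one edge) is connected. -/
/-!
Let `o ≠ o'` be acyclic orientations and fix a rank function `h` of `o` (strictly increasing
along directed paths of `o`). Among the edges `t → v` of `o` that `o'` orients the other way,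
pick one with minimal gap `h v - h t`, and flip it. This creates a directed cycle only if `o`
has another directed path from `t` to `v`. Every edge of such a path has a strictly smaller gap,
so by minimality all of them are oriented alike by `o'`, and with `v → t` they would form a
directed cycle of `o'`. Hence every flip of this kind is legal and reduces the number of edges on
which the two orientations disagree. Orienting every edge towards its larger endpoint for some
linear order on the vertices shows that acyclic orientations exist.
-/

/-- An acyclic orientation of `G`, given by a choice, for each edge, of the endpoint
toward which the edge is directed, such that the resulting digraph has no directed
cycle. -/
def IsAcyclicO {V : Type*} (G : SimpleGraph V) (o : G.edgeSet → V) : Prop :=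
  (∀ e : G.edgeSet, o e ∈ (e : Sym2 V)) ∧
    ∀ v : V, ¬ Relation.TransGen
      (fun a b => ∃ e : G.edgeSet, (e : Sym2 V) = s(a, b) ∧ o e = b) v v

open Relation

namespace Relation

variable {α : Type*} {r s : α → α → Prop} {a b u w : α}

theorem TransGen.or_of_transGen_or_arrow (h : TransGen (fun x y => r x y ∨ x = u ∧ y = w) a b) :
    TransGen r a b ∨ ReflTransGen r a u ∧ ReflTransGen r w b := by
  induction h with
  | single hab =>
    rcases hab with hab | ⟨rfl, rfl⟩
    · exact .inl (.single hab)
    · exact .inr ⟨.refl, .refl⟩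
  | tail _ hbc ih =>
    rcases hbc with hbc | ⟨rfl, rfl⟩
    · rcases ih with ih | ⟨hau, hwb⟩
      · exact .inl (ih.tail hbc)
      · exact .inr ⟨hau, hwb.tail hbc⟩
    · exact .inr ⟨ih.elim TransGen.to_reflTransGen And.left, .refl⟩

theorem not_transGen_or_arrow_self (hr : ∀ x, ¬ TransGen r x x) (hwu : ¬ ReflTransGen r w u)
    (x : α) : ¬ TransGen (fun a b => r a b ∨ a = u ∧ b = w) x x := fun h =>
  h.or_of_transGen_or_arrow.elim (hr x) fun ⟨hxu, hwx⟩ => hwu (hwx.trans hxu)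

theorem TransGen.transGen_or_exists_not (h : TransGen r a b) :
    TransGen s a b ∨ ∃ x y, r x y ∧ ¬ s x y ∧ ReflTransGen r a x ∧ ReflTransGen r y b := by
  induction h with
  | @single c hac =>
    by_cases hs : s a c
    · exact .inl (.single hs)
    · exact .inr ⟨a, c, hac, hs, .refl, .refl⟩
  | @tail c d hac hcd ih =>
    rcases ih with ih | ⟨x, y, hxy, hs, hax, hyc⟩
    · by_cases hs : s c d
      · exact .inl (ih.tail hs)
      · exact .inr ⟨c, d, hcd, hs, hac.to_reflTransGen, .refl⟩
    · exact .inr ⟨x, y, hxy, hs, hax, hyc.tail hcd⟩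

theorem exists_rank_of_acyclic [Finite α] (hr : ∀ x, ¬ TransGen r x x) :
    ∃ h : α → ℕ, ∀ a b, TransGen r a b → h a < h b := by
  refine ⟨fun b => {a | TransGen r a b}.ncard, fun a b hab => ?_⟩
  refine Set.ncard_lt_ncard (Set.ssubset_def.mpr ⟨fun x hx => hx.trans hab, fun hsub => ?_⟩)
    (Set.toFinite _)
  exact hr a (hsub hab)

variable {β : Type*} [Preorder β] {h : α → β}

theorem le_of_reflTransGen (hh : ∀ a b, TransGen r a b → h a < h b) (hab : ReflTransGen r a b) :
    h a ≤ h b := by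
  rcases reflTransGen_iff_eq_or_transGen.mp hab with rfl | hab
  · exact le_rfl
  · exact (hh a b hab).le

theorem eq_of_reflTransGen_of_le (hh : ∀ a b, TransGen r a b → h a < h b)
    (hab : ReflTransGen r a b) (hba : h b ≤ h a) : a = b := by
  rcases reflTransGen_iff_eq_or_transGen.mp hab with rfl | hab
  · rfl
  · exact absurd (hh a b hab) hba.not_gt

end Relation

theorem Function.setOf_update_ne {α β : Type*} [DecidableEq α] (f g : α → β) (a : α) :
    {x | update f a (g a) x ≠ g x} = {x | f x ≠ g x} \ {a} := by
  ext x
  by_cases hx : x = a <;> simp [hx]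

theorem Sym2.sup_mem {α : Type*} [LinearOrder α] (z : Sym2 α) : z.sup ∈ z := by
  induction z using Sym2.ind with
  | h a b => rcases le_total a b with hab | hab <;> simp [hab]

namespace SimpleGraph

variable {V : Type*} {G : SimpleGraph V} {o o' : G.edgeSet → V}

def IsArc (o : G.edgeSet → V) (a b : V) : Prop :=
  ∃ e : G.edgeSet, (e : Sym2 V) = s(a, b) ∧ o e = b

def IsArcExcept (o : G.edgeSet → V) (e₀ : G.edgeSet) (a b : V) : Prop :=
  ∃ e : G.edgeSet, e ≠ e₀ ∧ (e : Sym2 V) = s(a, b) ∧ o e = b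

theorem IsArcExcept.isArc {e₀ : G.edgeSet} {a b : V} (h : IsArcExcept o e₀ a b) : IsArc o a b :=
  let ⟨e, _, he, hb⟩ := h
  ⟨e, he, hb⟩

theorem isArcExcept_or_of_isArc_update [DecidableEq V] {e₀ : G.edgeSet} {t a b : V}
    (he₀ : (e₀ : Sym2 V) = s(t, o e₀)) (h : IsArc (Function.update o e₀ t) a b) :
    IsArcExcept o e₀ a b ∨ a = o e₀ ∧ b = t := by
  obtain ⟨e, he, hb⟩ := h
  rcases eq_or_ne e e₀ with rfl | hne
  · rw [Function.update_self] at hb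
    subst hb
    rw [he₀] at he
    rcases Sym2.eq_iff.mp he with ⟨rfl, hv⟩ | ⟨-, hv⟩ <;> exact .inr ⟨hv.symm, rfl⟩
  · exact .inl ⟨e, hne, he, by rwa [Function.update_of_ne hne] at hb⟩

theorem isAcyclicO_sup [LinearOrder V] (G : SimpleGraph V) :
    IsAcyclicO G fun e => (e : Sym2 V).sup := by
  refine ⟨fun e => ?_, fun v hv => ?_⟩
  · exact (e : Sym2 V).sup_mem
  · have hlt : ∀ a b, IsArc (G := G) (fun e => (e : Sym2 V).sup) a b → a < b := by
      rintro a b ⟨e, he, hb⟩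
      have hadj : G.Adj a b := G.mem_edgeSet.mp (he ▸ e.2)
      dsimp only at hb
      rw [he, Sym2.sup_mk, sup_eq_right] at hb
      exact hb.lt_of_ne hadj.ne
    have hvv := TransGen.mono hlt v v hv
    rw [transGen_eq_self] at hvv
    exact lt_irrefl v hvv

end SimpleGraph

namespace IsAcyclicO

open SimpleGraph

variable {V : Type*} {G : SimpleGraph V} {o o' : G.edgeSet → V}

theorem coe_eq_mk_of_ne (ho : IsAcyclicO G o) (ho' : IsAcyclicO G o') {e : G.edgeSet}
    (he : o e ≠ o' e) : (e : Sym2 V) = s(o' e, o e) :=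
  (Sym2.mem_and_mem_iff he.symm).mp ⟨ho'.1 e, ho.1 e⟩

theorem update [DecidableEq V] (ho : IsAcyclicO G o) {e₀ : G.edgeSet} {t : V}
    (he₀ : (e₀ : Sym2 V) = s(t, o e₀)) (hpath : ¬ ReflTransGen (IsArcExcept o e₀) t (o e₀)) :
    IsAcyclicO G (Function.update o e₀ t) := by
  refine ⟨fun e => ?_, fun x hx => ?_⟩
  · rcases eq_or_ne e e₀ with rfl | hne
    · simp [he₀]
    · simpa [hne] using ho.1 e
  · have hacyclic y : ¬ TransGen (IsArcExcept o e₀) y y :=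
      fun hy => ho.2 y (TransGen.mono (fun _ _ => IsArcExcept.isArc) y y hy)
    exact not_transGen_or_arrow_self hacyclic hpath x
      (TransGen.mono (fun _ _ => isArcExcept_or_of_isArc_update he₀) x x hx)

theorem not_reflTransGen_isArcExcept (ho : IsAcyclicO G o) (ho' : IsAcyclicO G o')
    {h : V → ℕ} (hh : ∀ a b, TransGen (IsArc o) a b → h a < h b) {e₀ : G.edgeSet}
    (he₀ : o e₀ ≠ o' e₀)
    (hmin : ∀ e, o e ≠ o' e → h (o e₀) - h (o' e₀) ≤ h (o e) - h (o' e)) :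
    ¬ ReflTransGen (IsArcExcept o e₀) (o' e₀) (o e₀) := by
  intro hpath
  have htv := (reflTransGen_iff_eq_or_transGen.mp hpath).resolve_left he₀
  rcases htv.transGen_or_exists_not (s := IsArc o') with
    ho'tv | ⟨x, y, ⟨e, hne, he, hy⟩, hxy', htx, hyv⟩
  · exact ho'.2 _ (ho'tv.tail ⟨e₀, by rw [coe_eq_mk_of_ne ho ho' he₀, Sym2.eq_swap], rfl⟩)
  have heD : o e ≠ o' e := fun h' => hxy' ⟨e, he, h' ▸ hy⟩
  have hx : o' e = x := by
    rw [coe_eq_mk_of_ne ho ho' heD, hy] at he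
    exact Sym2.congr_left.mp he
  have htx' := ReflTransGen.mono (fun _ _ => IsArcExcept.isArc) _ _ htx
  have hyv' := ReflTransGen.mono (fun _ _ => IsArcExcept.isArc) _ _ hyv
  have hgap := hmin e heD
  have hxy := hh x y (.single ⟨e, he, hy⟩)
  have htx_le := le_of_reflTransGen hh htx'
  have hyv_le := le_of_reflTransGen hh hyv'
  rw [hx, hy] at hgap
  obtain rfl : o' e₀ = x := eq_of_reflTransGen_of_le hh htx' (by omega)
  obtain rfl : y = o e₀ := eq_of_reflTransGen_of_le hh hyv' (by omega)
  exact hne (Subtype.ext (he.trans (coe_eq_mk_of_ne ho ho' he₀).symm))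

theorem exists_ne_isAcyclicO_update [Finite V] [DecidableEq V]
    (ho : IsAcyclicO G o) (ho' : IsAcyclicO G o') (hne : o ≠ o') :
    ∃ e₀, o e₀ ≠ o' e₀ ∧ IsAcyclicO G (Function.update o e₀ (o' e₀)) := by
  obtain ⟨h, hh⟩ := exists_rank_of_acyclic (r := IsArc o) ho.2
  obtain ⟨e₀, he₀, hmin⟩ := Set.exists_min_image {e | o e ≠ o' e}
    (fun e => h (o e) - h (o' e)) (Set.toFinite _) (Function.ne_iff.mp hne)
  exact ⟨e₀, he₀, ho.update (coe_eq_mk_of_ne ho ho' he₀)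
    (ho.not_reflTransGen_isArcExcept ho' hh he₀ hmin)⟩

end IsAcyclicO

namespace SimpleGraph

variable {V : Type*}

def flipGraph (G : SimpleGraph V) : SimpleGraph {o : G.edgeSet → V // IsAcyclicO G o} :=
  SimpleGraph.fromRel fun o o' => ∃ e₀ : G.edgeSet, ∀ e : G.edgeSet, e ≠ e₀ → o.val e = o'.val e

theorem flipGraph_preconnected [Finite V] (G : SimpleGraph V) : (flipGraph G).Preconnected := by
  classical
  intro o o'
  induction hn : {e | o.1 e ≠ o'.1 e}.ncard using Nat.strong_induction_on generalizing o with
  | _ n ih =>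
    rcases eq_or_ne o o' with rfl | hne
    · rfl
    obtain ⟨e₀, he₀, hflip⟩ :=
      o.2.exists_ne_isAcyclicO_update o'.2 fun h => hne (Subtype.ext h)
    have hadj : (flipGraph G).Adj o ⟨_, hflip⟩ := by
      refine (fromRel_adj _ _ _).mpr ⟨fun h => he₀ ?_, .inl ⟨e₀, fun e he => ?_⟩⟩
      · simpa using congrFun (congrArg Subtype.val h) e₀
      · exact (Function.update_of_ne he _ _).symm
    refine hadj.reachable.trans (ih _ ?_ _ rfl)
    rw [← hn, Function.setOf_update_ne]
    exact Set.ncard_sdiff_singleton_lt_of_mem he₀ (Set.toFinite _)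

end SimpleGraph

/-- The flip graph on the acyclic orientations of a finite graph `G` — two acyclic
orientations being adjacent if they differ in the orientation of exactly one edge —
is connected. -/
theorem flipGraph_connected {V : Type*} [Fintype V] (G : SimpleGraph V) :
    (SimpleGraph.fromRel
      (fun o o' : {o : G.edgeSet → V // IsAcyclicO G o} =>
        ∃ e₀ : G.edgeSet, ∀ e : G.edgeSet, e ≠ e₀ → o.val e = o'.val e)).Connected := by
  let _ : LinearOrder V := LinearOrder.lift' _ (Fintype.equivFin V).injective
  have : Nonempty {o : G.edgeSet → V // IsAcyclicO G o} := ⟨⟨_, SimpleGraph.isAcyclicO_sup G⟩⟩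
  exact ⟨SimpleGraph.flipGraph_preconnected G⟩
end

section
/- Let G be a K_4-free graph with triangle set T, and let \varepsilon \ne \varepsilon' be two sign vectors in {-1,+1}^T. Then the interiors of the cones S_\varepsilon and S_{\varepsilon'} are disjoint, where S_\varepsilon is the cone of polytopes of the form \sum_{e \in E} \lambda_e \Delta_e + \sum_{t \in T} \lambda_t (\varepsilon_t \Delta_t) with all \lambda > 0 in the interior. -/
open Pointwise

open scoped Classical in
noncomputable def triangles {V : Type*} [Fintype V] [DecidableEq V]
    (G : SimpleGraph V) : Finset (Finset V) :=
  Finset.univ.filter (fun t : Finset V => t.card = 3 ∧ G.IsClique (t : Set V))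

noncomputable def simplexOf {V : Type*} [Fintype V] [DecidableEq V]
    (X : Finset V) : Set (V → ℝ) :=
  convexHull ℝ ((X.image (fun i => Pi.single i (1 : ℝ))) : Set (V → ℝ))

namespace SEpsAux

set_option linter.unusedSectionVars false
set_option maxHeartbeats 1000000

variable {V : Type*} [Fintype V] [DecidableEq V]

/-- The linear functional `x ↦ ∑ w, u w * x w`. -/
noncomputable def Lu (u : V → ℝ) : (V → ℝ) →ₗ[ℝ] ℝ where
  toFun x := ∑ w, u w * x w
  map_add' x y := by simp [mul_add, Finset.sum_add_distrib]
  map_smul' c x := by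
    simp only [Pi.smul_apply, smul_eq_mul, RingHom.id_apply, Finset.mul_sum]
    exact Finset.sum_congr rfl fun w _ => by ring

lemma Lu_single (u : V → ℝ) (x : V) : Lu u (Pi.single x 1) = u x := by
  simp only [Lu, LinearMap.coe_mk, AddHom.coe_mk]
  rw [Finset.sum_eq_single x]
  · simp
  · intro b _ hb; simp [Pi.single_apply, hb]
  · intro h; exact absurd (Finset.mem_univ x) h

/-- Support-type functional. -/
noncomputable def sf (u : V → ℝ) (A : Set (V → ℝ)) : ℝ := sSup ((Lu u) '' A)

/-- Polytope: convex hull of a nonempty finite set. -/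
def Pol (A : Set (V → ℝ)) : Prop :=
  ∃ F : Finset (V → ℝ), F.Nonempty ∧ A = convexHull ℝ (↑F : Set (V → ℝ))

lemma isGreatest_hull (u : V → ℝ) (F : Finset (V → ℝ)) (hF : F.Nonempty) :
    IsGreatest ((Lu u) '' convexHull ℝ (↑F : Set (V → ℝ))) (F.sup' hF (Lu u)) := by
  constructor
  · obtain ⟨x, hx, hEq⟩ := Finset.exists_mem_eq_sup' hF (Lu u)
    exact ⟨x, subset_convexHull ℝ _ hx, hEq.symm⟩
  · rintro y ⟨p, hp, rfl⟩
    have h1 : convexHull ℝ (↑F : Set (V → ℝ)) ⊆ {x | Lu u x ≤ F.sup' hF (Lu u)} :=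
      convexHull_min (fun x hx => Finset.le_sup' (Lu u) hx)
        (convex_halfSpace_le (LinearMap.isLinear (Lu u)) _)
    exact h1 hp

lemma sf_hull (u : V → ℝ) (F : Finset (V → ℝ)) (hF : F.Nonempty) :
    sf u (convexHull ℝ (↑F : Set (V → ℝ))) = F.sup' hF (Lu u) :=
  (isGreatest_hull u F hF).csSup_eq

lemma pol_singleton (v : V → ℝ) : Pol ({v} : Set (V → ℝ)) :=
  ⟨{v}, Finset.singleton_nonempty v, by simp [convexHull_singleton]⟩

lemma sf_singleton (u v : V → ℝ) : sf u ({v} : Set (V → ℝ)) = Lu u v := by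
  simp [sf, Set.image_singleton]

lemma pol_add {A B : Set (V → ℝ)} (hA : Pol A) (hB : Pol B) : Pol (A + B) := by
  classical
  obtain ⟨F, hF, rfl⟩ := hA
  obtain ⟨F', hF', rfl⟩ := hB
  exact ⟨F + F', hF.add hF', by rw [Finset.coe_add, convexHull_add]⟩

lemma pol_smul (c : ℝ) {A : Set (V → ℝ)} (hA : Pol A) : Pol (c • A) := by
  classical
  obtain ⟨F, hF, rfl⟩ := hA
  exact ⟨c • F, hF.smul_finset, by rw [Finset.coe_smul_finset, convexHull_smul]⟩

lemma sup'_add_finset (u : V → ℝ) (F F' : Finset (V → ℝ)) (hF : F.Nonempty)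
    (hF' : F'.Nonempty) :
    (F + F').sup' (hF.add hF') (Lu u) = F.sup' hF (Lu u) + F'.sup' hF' (Lu u) := by
  classical
  apply le_antisymm
  · apply Finset.sup'_le
    intro z hz
    rw [Finset.mem_add] at hz
    obtain ⟨x, hx, y, hy, rfl⟩ := hz
    rw [map_add]
    exact add_le_add (Finset.le_sup' _ hx) (Finset.le_sup' _ hy)
  · obtain ⟨x, hx, hxe⟩ := Finset.exists_mem_eq_sup' hF (Lu u)
    obtain ⟨y, hy, hye⟩ := Finset.exists_mem_eq_sup' hF' (Lu u)
    rw [hxe, hye, ← map_add]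
    exact Finset.le_sup' (Lu u) (Finset.add_mem_add hx hy)

lemma sf_add (u : V → ℝ) {A B : Set (V → ℝ)} (hA : Pol A) (hB : Pol B) :
    sf u (A + B) = sf u A + sf u B := by
  classical
  obtain ⟨F, hF, rfl⟩ := hA
  obtain ⟨F', hF', rfl⟩ := hB
  rw [← convexHull_add, ← Finset.coe_add, sf_hull u F hF, sf_hull u F' hF',
    sf_hull u (F + F') (hF.add hF'), sup'_add_finset]

lemma pol_sum_sf {ι : Type*} (u : V → ℝ) (s : Finset ι) (g : ι → Set (V → ℝ))
    (hg : ∀ x ∈ s, Pol (g x)) :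
    Pol (∑ x ∈ s, g x) ∧ sf u (∑ x ∈ s, g x) = ∑ x ∈ s, sf u (g x) := by
  classical
  induction s using Finset.induction_on with
  | empty =>
      refine ⟨?_, ?_⟩
      · simp only [Finset.sum_empty]; exact pol_singleton (0 : V → ℝ)
      · simp only [Finset.sum_empty]
        have : (0 : Set (V → ℝ)) = ({0} : Set (V → ℝ)) := rfl
        rw [this, sf_singleton, map_zero]
  | @insert a s' hx ih =>
      have h1 : Pol (g a) := hg a (Finset.mem_insert_self a s')
      obtain ⟨hp, hs⟩ := ih (fun x hxs => hg x (Finset.mem_insert_of_mem hxs))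
      constructor
      · rw [Finset.sum_insert hx]; exact pol_add h1 hp
      · rw [Finset.sum_insert hx, Finset.sum_insert hx, sf_add u h1 hp, hs]

lemma sup'_smul_finset (u : V → ℝ) (c : ℝ) (F : Finset (V → ℝ)) (hF : F.Nonempty) :
    (c • F).sup' hF.smul_finset (Lu u) = F.sup' hF (fun x => c * Lu u x) := by
  classical
  apply le_antisymm
  · apply Finset.sup'_le
    intro z hz
    rw [Finset.mem_smul_finset] at hz
    obtain ⟨x, hx, rfl⟩ := hz
    have : Lu u (c • x) = c * Lu u x := by simp [map_smul, smul_eq_mul]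
    rw [this]
    exact Finset.le_sup' (fun x => c * Lu u x) hx
  · apply Finset.sup'_le
    intro x hx
    have : c * Lu u x = Lu u (c • x) := by simp [map_smul, smul_eq_mul]
    rw [this]
    exact Finset.le_sup' (Lu u) (Finset.smul_mem_smul_finset hx)

lemma sup'_const_mul {α : Type*} (F : Finset α) (h : F.Nonempty) (f : α → ℝ) {c : ℝ}
    (hc : 0 ≤ c) : F.sup' h (fun x => c * f x) = c * F.sup' h f := by
  apply le_antisymm
  · exact Finset.sup'_le _ _ fun x hx =>
      mul_le_mul_of_nonneg_left (Finset.le_sup' f hx) hc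
  · obtain ⟨x, hx, hEq⟩ := Finset.exists_mem_eq_sup' h f
    rw [hEq]
    exact Finset.le_sup' (fun x => c * f x) hx

lemma sf_smul_hull (u : V → ℝ) {c : ℝ} (hc : 0 ≤ c) (F : Finset (V → ℝ))
    (hF : F.Nonempty) :
    sf u (c • convexHull ℝ (↑F : Set (V → ℝ))) = c * F.sup' hF (Lu u) := by
  rw [← convexHull_smul, ← Finset.coe_smul_finset, sf_hull u _ hF.smul_finset,
    sup'_smul_finset u c F hF, sup'_const_mul F hF _ hc]

/-- Explicit test vector. -/
def uu (i j k : V) (a b c : ℝ) : V → ℝ :=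
  fun w => if w = i then a else if w = j then b else if w = k then c else 0

/-- Support value on an edge segment. -/
noncomputable def valE (u : V → ℝ) : Sym2 V → ℝ :=
  Sym2.lift ⟨fun x y => max (u x) (u y), fun x y => max_comm (u x) (u y)⟩

/-- Support value on a (possibly reflected) simplex. -/
noncomputable def valT (u : V → ℝ) (σ : ℝ) (t : Finset V) : ℝ :=
  if h : t.Nonempty then t.sup' h (fun w => σ * u w) else 0

lemma edgeSeg_eq (x y : V) :
    edgeSeg s(x, y)
      = convexHull ℝ (↑({Pi.single x 1, Pi.single y 1} : Finset (V → ℝ)) : Set (V → ℝ)) := by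
  rw [edgeSeg, Sym2.lift_mk]
  rw [Finset.coe_insert, Finset.coe_singleton, convexHull_pair]

lemma sf_edge (u : V → ℝ) {c : ℝ} (hc : 0 ≤ c) (x y : V) :
    sf u (c • edgeSeg s(x, y)) = c * valE u s(x, y) := by
  classical
  rw [edgeSeg_eq, sf_smul_hull u hc _ (Finset.insert_nonempty _ _)]
  congr 1
  rw [valE, Sym2.lift_mk]
  simp [Finset.sup'_insert, Lu_single]

lemma sf_tri (u : V → ℝ) {c : ℝ} (hc : 0 ≤ c) (σ : ℝ) (t : Finset V)
    (ht : t.Nonempty) :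
    sf u (c • (σ • simplexOf t)) = c * valT u σ t := by
  classical
  have himg : (t.image (fun w => Pi.single w (1 : ℝ))).Nonempty := ht.image _
  have h1 : σ • simplexOf t
      = convexHull ℝ (↑(σ • t.image (fun w => Pi.single w (1 : ℝ))) : Set (V → ℝ)) := by
    rw [simplexOf, Finset.coe_smul_finset, convexHull_smul]
  rw [h1, sf_smul_hull u hc _ himg.smul_finset]
  congr 1
  rw [valT, dif_pos ht, sup'_smul_finset u σ _ himg, Finset.sup'_image]
  apply Finset.sup'_congr _ rfl
  intro w _
  simp [Function.comp, Lu_single]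

/-- The master decomposition formula. -/
lemma master (G : SimpleGraph V) [DecidableRel G.Adj]
    (lamE : Sym2 V → ℝ) (lamT εf : Finset V → ℝ) (v : V → ℝ)
    (hE : ∀ e ∈ G.edgeFinset, 0 ≤ lamE e) (hT : ∀ t ∈ triangles G, 0 ≤ lamT t)
    (u : V → ℝ) :
    sf u ({v} + (∑ e ∈ G.edgeFinset, lamE e • edgeSeg e
        + ∑ t ∈ triangles G, lamT t • (εf t • simplexOf t)))
      = Lu u v + (∑ e ∈ G.edgeFinset, lamE e * valE u e
        + ∑ t ∈ triangles G, lamT t * valT u (εf t) t) := by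
  classical
  have htri : ∀ t ∈ triangles G, t.Nonempty := by
    intro t htm
    have : t.card = 3 := by
      simp only [triangles, Finset.mem_filter] at htm
      exact htm.2.1
    exact Finset.card_pos.1 (by rw [this]; norm_num)
  have polE : ∀ e ∈ G.edgeFinset,
      Pol (lamE e • edgeSeg e) ∧ sf u (lamE e • edgeSeg e) = lamE e * valE u e := by
    intro e he
    induction e using Sym2.ind with
    | _ x y =>
      refine ⟨?_, sf_edge u (hE _ he) x y⟩
      exact pol_smul _ ⟨_, Finset.insert_nonempty _ _, edgeSeg_eq x y⟩
  have polT : ∀ t ∈ triangles G,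
      Pol (lamT t • (εf t • simplexOf t))
        ∧ sf u (lamT t • (εf t • simplexOf t)) = lamT t * valT u (εf t) t := by
    intro t htm
    refine ⟨?_, sf_tri u (hT _ htm) (εf t) t (htri t htm)⟩
    exact pol_smul _ (pol_smul _ ⟨_, (htri t htm).image _, rfl⟩)
  obtain ⟨pol1, sum1⟩ := pol_sum_sf u G.edgeFinset _ (fun e he => (polE e he).1)
  obtain ⟨pol2, sum2⟩ := pol_sum_sf u (triangles G) _ (fun t htm => (polT t htm).1)
  rw [sf_add u (pol_singleton v) (pol_add pol1 pol2), sf_add u pol1 pol2,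
    sf_singleton, sum1, sum2]
  congr 1
  congr 1
  · exact Finset.sum_congr rfl (fun e he => (polE e he).2)
  · exact Finset.sum_congr rfl (fun t htm => (polT t htm).2)

lemma Lu_uu (i j k : V) (hij : i ≠ j) (hik : i ≠ k) (hjk : j ≠ k)
    (a b c : ℝ) (v : V → ℝ) :
    Lu (uu i j k a b c) v = a * v i + b * v j + c * v k := by
  classical
  have hw : ∀ w, uu i j k a b c w * v w
      = (if w = i then a * v i else 0)
        + ((if w = j then b * v j else 0) + (if w = k then c * v k else 0)) := by
    intro w
    by_cases hwi : w = i <;> by_cases hwj : w = j <;> by_cases hwk : w = k <;>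
      simp_all [uu]
  simp only [Lu, LinearMap.coe_mk, AddHom.coe_mk]
  rw [Finset.sum_congr rfl (fun w _ => hw w), Finset.sum_add_distrib,
    Finset.sum_add_distrib, Finset.sum_ite_eq', Finset.sum_ite_eq',
    Finset.sum_ite_eq']
  simp
  ring

lemma edge_comb (i j k : V) (hij : i ≠ j) (hik : i ≠ k) (hjk : j ≠ k) (x y : V) :
    valE (uu i j k (3/2) (1/2) 2) s(x, y) + valE (uu i j k (1/2) (3/2) 2) s(x, y)
      - 2 * valE (uu i j k 1 1 2) s(x, y) - valE (uu i j k (3/2) (1/2) 0) s(x, y)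
      - valE (uu i j k (1/2) (3/2) 0) s(x, y) + 2 * valE (uu i j k 1 1 0) s(x, y)
      = 0 := by
  simp only [valE, Sym2.lift_mk]
  by_cases hxi : x = i <;> by_cases hxj : x = j <;> by_cases hxk : x = k <;>
    by_cases hyi : y = i <;> by_cases hyj : y = j <;> by_cases hyk : y = k <;>
    simp_all [uu] <;> norm_num [max_def]

lemma sup'_pattern (i j k : V) (hij : i ≠ j) (hik : i ≠ k) (hjk : j ≠ k)
    (σ a b c : ℝ) (t : Finset V) (ht : t.Nonempty)
    (m : V) (hm : m ∈ t) (hmi : m ≠ i) (hmj : m ≠ j) (hmk : m ≠ k) :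
    t.sup' ht (fun w => σ * uu i j k a b c w)
      = max (if i ∈ t then σ * a else 0)
          (max (if j ∈ t then σ * b else 0) (max (if k ∈ t then σ * c else 0) 0)) := by
  have h0 : (0 : ℝ) ≤ t.sup' ht (fun w => σ * uu i j k a b c w) := by
    have hv : σ * uu i j k a b c m = 0 := by simp [uu, hmi, hmj, hmk]
    calc (0 : ℝ) = σ * uu i j k a b c m := hv.symm
    _ ≤ _ := Finset.le_sup' (fun w => σ * uu i j k a b c w) hm
  apply le_antisymm
  · apply Finset.sup'_le
    intro w hw
    by_cases hwi : w = i
    · have hv : uu i j k a b c w = a := by simp [uu, hwi]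
      have hit : i ∈ t := by rwa [hwi] at hw
      rw [hv]
      calc σ * a = (if i ∈ t then σ * a else 0) := by rw [if_pos hit]
      _ ≤ _ := le_max_left _ _
    by_cases hwj : w = j
    · have hv : uu i j k a b c w = b := by simp [uu, hwj, Ne.symm hij]
      have hjt : j ∈ t := by rwa [hwj] at hw
      rw [hv]
      calc σ * b = (if j ∈ t then σ * b else 0) := by rw [if_pos hjt]
      _ ≤ _ := le_max_of_le_right (le_max_left _ _)
    by_cases hwk : w = k
    · have hv : uu i j k a b c w = c := by
        simp [uu, hwk, Ne.symm hik, Ne.symm hjk]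
      have hkt : k ∈ t := by rwa [hwk] at hw
      rw [hv]
      calc σ * c = (if k ∈ t then σ * c else 0) := by rw [if_pos hkt]
      _ ≤ _ := le_max_of_le_right (le_max_of_le_right (le_max_left _ _))
    · have hv : uu i j k a b c w = 0 := by simp [uu, hwi, hwj, hwk]
      rw [hv, mul_zero]
      exact le_max_of_le_right (le_max_of_le_right (le_max_right _ _))
  · apply max_le
    · split_ifs with h
      · have hv : uu i j k a b c i = a := by simp [uu]
        calc σ * a = σ * uu i j k a b c i := by rw [hv]
        _ ≤ _ := Finset.le_sup' (fun w => σ * uu i j k a b c w) h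
      · exact h0
    apply max_le
    · split_ifs with h
      · have hv : uu i j k a b c j = b := by simp [uu, Ne.symm hij]
        calc σ * b = σ * uu i j k a b c j := by rw [hv]
        _ ≤ _ := Finset.le_sup' (fun w => σ * uu i j k a b c w) h
      · exact h0
    apply max_le
    · split_ifs with h
      · have hv : uu i j k a b c k = c := by simp [uu, Ne.symm hik, Ne.symm hjk]
        calc σ * c = σ * uu i j k a b c k := by rw [hv]
        _ ≤ _ := Finset.le_sup' (fun w => σ * uu i j k a b c w) h
      · exact h0
    · exact h0

lemma tri_comb (i j k : V) (hij : i ≠ j) (hik : i ≠ k) (hjk : j ≠ k)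
    (σ : ℝ) (hσ : σ = 1 ∨ σ = -1) (t : Finset V) (ht3 : t.card = 3) :
    valT (uu i j k (3/2) (1/2) 2) σ t + valT (uu i j k (1/2) (3/2) 2) σ t
      - 2 * valT (uu i j k 1 1 2) σ t - valT (uu i j k (3/2) (1/2) 0) σ t
      - valT (uu i j k (1/2) (3/2) 0) σ t + 2 * valT (uu i j k 1 1 0) σ t
      = if t = ({i, j, k} : Finset V) then -σ else 0 := by
  classical
  have ht : t.Nonempty := Finset.card_pos.1 (by rw [ht3]; norm_num)
  have hcard3 : ({i, j, k} : Finset V).card = 3 :=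
    Finset.card_eq_three.2 ⟨i, j, k, hij, hik, hjk, rfl⟩
  simp only [valT, dif_pos ht]
  by_cases htt : t = ({i, j, k} : Finset V)
  · subst htt
    rw [if_pos rfl]
    have hsup : ∀ σ' a b c : ℝ,
        ({i, j, k} : Finset V).sup' ht (fun w => σ' * uu i j k a b c w)
          = max (σ' * a) (max (σ' * b) (σ' * c)) := by
      intro σ' a b c
      have h1 : uu i j k a b c i = a := by simp [uu]
      have h2 : uu i j k a b c j = b := by simp [uu, Ne.symm hij]
      have h3 : uu i j k a b c k = c := by simp [uu, Ne.symm hik, Ne.symm hjk]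
      simp [Finset.sup'_insert, h1, h2, h3]
    rw [hsup, hsup, hsup, hsup, hsup, hsup]
    rcases hσ with h | h <;> subst h <;> norm_num [max_def]
  · rw [if_neg htt]
    have hm : ∃ m ∈ t, m ≠ i ∧ m ≠ j ∧ m ≠ k := by
      by_contra hcon
      push_neg at hcon
      have hsub : t ⊆ ({i, j, k} : Finset V) := by
        intro w hw
        by_cases h1 : w = i
        · simp [h1]
        by_cases h2 : w = j
        · simp [h2]
        have h3 := hcon w hw h1 h2
        simp [h3]
      exact htt (Finset.eq_of_subset_of_card_le hsub (by rw [ht3, hcard3]))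
    obtain ⟨m, hmt, hmi, hmj, hmk⟩ := hm
    simp only [fun σ' a b c =>
      sup'_pattern i j k hij hik hjk σ' a b c t ht m hmt hmi hmj hmk]
    have hijk : ¬(i ∈ t ∧ j ∈ t ∧ k ∈ t) := by
      rintro ⟨h1, h2, h3⟩
      apply htt
      have hsub : ({i, j, k} : Finset V) ⊆ t := by
        intro w hw
        simp only [Finset.mem_insert, Finset.mem_singleton] at hw
        rcases hw with rfl | rfl | rfl <;> assumption
      exact (Finset.eq_of_subset_of_card_le hsub (by rw [ht3, hcard3])).symm
    by_cases hi : i ∈ t <;> by_cases hj : j ∈ t <;> by_cases hk : k ∈ t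
    · exact absurd ⟨hi, hj, hk⟩ hijk
    all_goals
      simp only [hi, hj, hk, if_true, if_false] <;>
        rcases hσ with h | h <;> subst h <;> norm_num [max_def]

lemma sum_comb {ι : Type*} (s : Finset ι) (l f1 f2 f3 f4 f5 f6 g : ι → ℝ)
    (h : ∀ e ∈ s, f1 e + f2 e - 2 * f3 e - f4 e - f5 e + 2 * f6 e = g e) :
    (∑ e ∈ s, l e * f1 e) + (∑ e ∈ s, l e * f2 e) - 2 * (∑ e ∈ s, l e * f3 e)
      - (∑ e ∈ s, l e * f4 e) - (∑ e ∈ s, l e * f5 e)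
      + 2 * (∑ e ∈ s, l e * f6 e)
      = ∑ e ∈ s, l e * g e := by
  have h1 : ∑ e ∈ s, l e * g e
      = ∑ e ∈ s, (l e * f1 e + l e * f2 e - (l e * f3 e + l e * f3 e)
          - l e * f4 e - l e * f5 e + (l e * f6 e + l e * f6 e)) :=
    Finset.sum_congr rfl fun e he => by rw [← h e he]; ring
  rw [h1]
  simp only [Finset.sum_add_distrib, Finset.sum_sub_distrib]
  ring

end SEpsAux

open SEpsAux in
/-- For a `K₄`-free graph `G` and distinct sign vectors `ε ≠ ε'` on the triangles of
`G`, the interiors of the cones `S_ε` and `S_{ε'}` are disjoint: no polytope is, up to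
translation, simultaneously of the form `∑_e λ_e Δ_e + ∑_t λ_t (ε_t Δ_t)` and
`∑_e λ'_e Δ_e + ∑_t λ'_t (ε'_t Δ_t)` with all coefficients positive. -/
theorem interiors_S_eps_disjoint {V : Type*} [Fintype V] [DecidableEq V]
    (G : SimpleGraph V) [DecidableRel G.Adj] (hG : G.CliqueFree 4)
    (ε ε' : Finset V → ℝ)
    (hε : ∀ t ∈ triangles G, ε t = 1 ∨ ε t = -1)
    (hε' : ∀ t ∈ triangles G, ε' t = 1 ∨ ε' t = -1)
    (hne : ∃ t ∈ triangles G, ε t ≠ ε' t) :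
    ¬ ∃ (P : Set (V → ℝ)) (lamE lamE' : Sym2 V → ℝ) (lamT lamT' : Finset V → ℝ)
        (v v' : V → ℝ),
        (∀ e ∈ G.edgeFinset, 0 < lamE e) ∧ (∀ t ∈ triangles G, 0 < lamT t) ∧
        (∀ e ∈ G.edgeFinset, 0 < lamE' e) ∧ (∀ t ∈ triangles G, 0 < lamT' t) ∧
        P = {v} + (∑ e ∈ G.edgeFinset, lamE e • edgeSeg e
            + ∑ t ∈ triangles G, lamT t • (ε t • simplexOf t)) ∧
        P = {v'} + (∑ e ∈ G.edgeFinset, lamE' e • edgeSeg e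
            + ∑ t ∈ triangles G, lamT' t • (ε' t • simplexOf t)) := by
  classical
  rintro ⟨P, lamE, lamE', lamT, lamT', v, v', hposE, hposT, hposE', hposT', hP, hP'⟩
  obtain ⟨t0, ht0, hsig⟩ := hne
  have ht03 : t0.card = 3 := by
    have h := ht0
    simp only [triangles, Finset.mem_filter] at h
    exact h.2.1
  obtain ⟨i, j, k, hij, hik, hjk, ht0e⟩ := Finset.card_eq_three.1 ht03
  -- the six test vectors
  set u1 := uu i j k (3/2) (1/2) 2 with hu1
  set u2 := uu i j k (1/2) (3/2) 2 with hu2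
  set u3 := uu i j k 1 1 2 with hu3
  set u4 := uu i j k (3/2) (1/2) 0 with hu4
  set u5 := uu i j k (1/2) (3/2) 0 with hu5
  set u6 := uu i j k 1 1 0 with hu6
  -- combination value for one decomposition
  have comb : ∀ (lE : Sym2 V → ℝ) (lT ef : Finset V → ℝ) (w : V → ℝ),
      (∀ e ∈ G.edgeFinset, 0 ≤ lE e) → (∀ t ∈ triangles G, 0 ≤ lT t) →
      (∀ t ∈ triangles G, ef t = 1 ∨ ef t = -1) →
      sf u1 ({w} + (∑ e ∈ G.edgeFinset, lE e • edgeSeg e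
          + ∑ t ∈ triangles G, lT t • (ef t • simplexOf t)))
        + sf u2 ({w} + (∑ e ∈ G.edgeFinset, lE e • edgeSeg e
          + ∑ t ∈ triangles G, lT t • (ef t • simplexOf t)))
        - 2 * sf u3 ({w} + (∑ e ∈ G.edgeFinset, lE e • edgeSeg e
          + ∑ t ∈ triangles G, lT t • (ef t • simplexOf t)))
        - sf u4 ({w} + (∑ e ∈ G.edgeFinset, lE e • edgeSeg e
          + ∑ t ∈ triangles G, lT t • (ef t • simplexOf t)))
        - sf u5 ({w} + (∑ e ∈ G.edgeFinset, lE e • edgeSeg e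
          + ∑ t ∈ triangles G, lT t • (ef t • simplexOf t)))
        + 2 * sf u6 ({w} + (∑ e ∈ G.edgeFinset, lE e • edgeSeg e
          + ∑ t ∈ triangles G, lT t • (ef t • simplexOf t)))
        = -(ef t0 * lT t0) := by
    intro lE lT ef w hlE hlT hef
    rw [master G lE lT ef w hlE hlT u1, master G lE lT ef w hlE hlT u2,
      master G lE lT ef w hlE hlT u3, master G lE lT ef w hlE hlT u4,
      master G lE lT ef w hlE hlT u5, master G lE lT ef w hlE hlT u6]
    have hLu : Lu u1 w + Lu u2 w - 2 * Lu u3 w - Lu u4 w - Lu u5 w + 2 * Lu u6 w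
        = 0 := by
      rw [hu1, hu2, hu3, hu4, hu5, hu6,
        Lu_uu i j k hij hik hjk _ _ _ w, Lu_uu i j k hij hik hjk _ _ _ w,
        Lu_uu i j k hij hik hjk _ _ _ w, Lu_uu i j k hij hik hjk _ _ _ w,
        Lu_uu i j k hij hik hjk _ _ _ w, Lu_uu i j k hij hik hjk _ _ _ w]
      ring
    have hEsum : (∑ e ∈ G.edgeFinset, lE e * valE u1 e)
        + (∑ e ∈ G.edgeFinset, lE e * valE u2 e)
        - 2 * (∑ e ∈ G.edgeFinset, lE e * valE u3 e)
        - (∑ e ∈ G.edgeFinset, lE e * valE u4 e)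
        - (∑ e ∈ G.edgeFinset, lE e * valE u5 e)
        + 2 * (∑ e ∈ G.edgeFinset, lE e * valE u6 e)
        = ∑ e ∈ G.edgeFinset, lE e * 0 := by
      apply sum_comb
      intro e _
      induction e using Sym2.ind with
      | _ x y => exact edge_comb i j k hij hik hjk x y
    have hTsum : (∑ t ∈ triangles G, lT t * valT u1 (ef t) t)
        + (∑ t ∈ triangles G, lT t * valT u2 (ef t) t)
        - 2 * (∑ t ∈ triangles G, lT t * valT u3 (ef t) t)
        - (∑ t ∈ triangles G, lT t * valT u4 (ef t) t)
        - (∑ t ∈ triangles G, lT t * valT u5 (ef t) t)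
        + 2 * (∑ t ∈ triangles G, lT t * valT u6 (ef t) t)
        = ∑ t ∈ triangles G,
            lT t * (if t = ({i, j, k} : Finset V) then -(ef t) else 0) := by
      apply sum_comb
      intro t htm
      have ht3 : t.card = 3 := by
        have h := htm
        simp only [triangles, Finset.mem_filter] at h
        exact h.2.1
      exact tri_comb i j k hij hik hjk (ef t) (hef t htm) t ht3
    have hTval : ∑ t ∈ triangles G,
        lT t * (if t = ({i, j, k} : Finset V) then -(ef t) else 0)
        = -(ef t0 * lT t0) := by
      rw [← ht0e]
      have : ∀ t ∈ triangles G,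
          lT t * (if t = t0 then -(ef t) else 0)
            = if t = t0 then -(ef t * lT t) else 0 := by
        intro t _
        split_ifs <;> ring
      rw [Finset.sum_congr rfl this, Finset.sum_ite_eq' (triangles G) t0
        (fun t => -(ef t * lT t)), if_pos ht0]
    have hEval : (∑ e ∈ G.edgeFinset, lE e * 0) = 0 := by simp
    linarith [hLu, hEsum, hTsum, hTval, hEval]
  have c1 := comb lamE lamT ε v (fun e he => (hposE e he).le)
    (fun t htm => (hposT t htm).le) hε
  have c2 := comb lamE' lamT' ε' v' (fun e he => (hposE' e he).le)
    (fun t htm => (hposT' t htm).le) hε'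
  rw [← hP] at c1
  rw [← hP'] at c2
  have hkey : -(ε t0 * lamT t0) = -(ε' t0 * lamT' t0) := by rw [← c1, ← c2]
  have hl : 0 < lamT t0 := hposT t0 ht0
  have hl' : 0 < lamT' t0 := hposT' t0 ht0
  rcases hε t0 ht0 with h1 | h1 <;> rcases hε' t0 ht0 with h2 | h2 <;>
    rw [h1, h2] at hkey hsig <;> first
      | exact hsig rfl
      | (rw [h1, h2] at *; nlinarith)
      | nlinarith
end
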